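/- Let (F, v) be a discretely valued field with residue field of odd characteristic and uniformizer π. Let a, b ∈ F with v(a) = 0, v(b) = 1, and suppose the residue class of a is not a square in the residue field. Suppose d ∈ F× is a square in the completion F_v and F contains i with i² = −1. Then the equation d = −a x² − b y² + a b z² has no solution with x, y, z ∈ F. In other words, d is not the norm of a pure quaternion in (a,b)_F. -/

import Mathlib

/-!
Put `X = i x` and `Y = i y`, so that `d = a X² + b (Y² + a z²)`. Since `i ∈ F`, the residue
of `-a` is not a square either, so `Y² + a z²` is anisotropic mod `m_v` and has even
valuation; hence `b (Y² + a z²)` has odd valuation. The valuation of `d`, a square in `F_v`,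
is even, so `a X²` must strictly dominate, and then `d ≡ a X²` up to smaller terms makes
`a` a square modulo `m_v`.
-/

namespace Valuation

variable {K Γ₀ : Type*} [Field K] [LinearOrderedCommGroupWithZero Γ₀]

/-- `d` is a square up to terms of strictly smaller valuation; for a unit `d` this says
that the residue of `d` is a square. -/
def IsNearSquare (v : Valuation K Γ₀) (d : K) : Prop :=
  ∃ r : K, v (d - r * r) < v d

variable {v : Valuation K Γ₀} {c d : K}

theorem IsNearSquare.isSquare_valuation (hd : v.IsNearSquare d) : IsSquare (v d) := by
  obtain ⟨r, hr⟩ := hd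
  refine ⟨v r, ?_⟩
  rw [← map_mul, v.map_eq_of_sub_lt (x := d) (y := r * r) (by rwa [v.map_sub_swap])]

theorem IsNearSquare.ne_zero (hd : v.IsNearSquare d) : d ≠ 0 := by
  rintro rfl
  obtain ⟨r, hr⟩ := hd
  simp at hr

theorem IsNearSquare.of_valuation_sub_lt (hd : v.IsNearSquare d) (hcd : v (c - d) < v c) :
    v.IsNearSquare c := by
  obtain ⟨r, hr⟩ := hd
  have hdc : v d = v c := v.map_eq_of_sub_lt (by rwa [v.map_sub_swap])
  refine ⟨r, ?_⟩
  calc v (c - r * r) = v ((c - d) + (d - r * r)) := by ring_nf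
    _ ≤ max (v (c - d)) (v (d - r * r)) := v.map_add _ _
    _ < v c := max_lt hcd (hdc ▸ hr)

theorem IsNearSquare.of_mul_mul_self {a X : K} (h : v.IsNearSquare (a * (X * X))) :
    v.IsNearSquare a := by
  have hX : X ≠ 0 := by rintro rfl; exact h.ne_zero (by simp)
  obtain ⟨r, hr⟩ := h
  refine ⟨r / X, ?_⟩
  have hXX : v (X * X) ≠ 0 := by simp [hX]
  have key : a - r / X * (r / X) = (a * (X * X) - r * r) / (X * X) := by field_simp
  rw [key, map_div₀, div_lt_iff₀ (zero_lt_iff.mpr hXX), ← map_mul]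
  exact hr

theorem IsNearSquare.neg {i : K} (hi : i ^ 2 = -1) (hd : v.IsNearSquare d) :
    v.IsNearSquare (-d) := by
  obtain ⟨r, hr⟩ := hd
  refine ⟨i * r, ?_⟩
  have key : -d - i * r * (i * r) = -(d - r * r) := by linear_combination (-(r * r)) * hi
  rwa [key, map_neg, map_neg]

/-- The form `y² + a z²` is anisotropic modulo the maximal ideal, so no cancellation occurs. -/
theorem isSquare_valuation_mul_self_add_mul {a : K} (ha : v a = 1)
    (hna : ¬ v.IsNearSquare (-a)) (y z : K) : IsSquare (v (y * y + a * (z * z))) := by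
  have hazz : v (a * (z * z)) = v z * v z := by rw [map_mul, ha, one_mul, map_mul]
  by_cases hne : v (y * y) = v (a * (z * z))
  · suffices v (y * y + a * (z * z)) = v (a * (z * z)) from ⟨v z, this.trans hazz⟩
    refine le_antisymm ((v.map_add _ _).trans (by rw [hne, max_self])) (not_lt.mp fun hlt ↦ ?_)
    refine hna (IsNearSquare.of_mul_mul_self (X := z) ⟨y, ?_⟩)
    rwa [show -a * (z * z) - y * y = -(y * y + a * (z * z)) by ring, map_neg, neg_mul, map_neg]
  · rw [v.map_add_of_distinct_val hne]
    rcases max_choice (v (y * y)) (v (a * (z * z))) with h | h <;> rw [h]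
    · exact ⟨v y, map_mul _ _ _⟩
    · exact ⟨v z, hazz⟩

end Valuation

theorem not_isSquare_mul_of_isSquare {G : Type*} [CommGroupWithZero G] {β γ : G}
    (hβ : ¬ IsSquare β) (hγ : IsSquare γ) (hγ0 : γ ≠ 0) : ¬ IsSquare (β * γ) :=
  fun h ↦ hβ (by simpa [hγ0] using h.div hγ)

theorem not_isSquare_ofAdd_neg_one :
    ¬ IsSquare ((Multiplicative.ofAdd (-1 : ℤ) : Multiplicative ℤ) :
      WithZero (Multiplicative ℤ)) := by
  rintro ⟨γ, hγ⟩
  have hγ0 : γ ≠ 0 := by rintro rfl; simp at hγ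
  obtain ⟨g, rfl⟩ := WithZero.ne_zero_iff_exists.mp hγ0
  rw [← WithZero.coe_mul, WithZero.coe_inj] at hγ
  have := congrArg Multiplicative.toAdd hγ
  simp only [toAdd_ofAdd, toAdd_mul] at this
  omega

theorem Valued.isNearSquare_of_isSquare_coe {K Γ₀ : Type*} [Field K]
    [LinearOrderedCommGroupWithZero Γ₀] [Valued K Γ₀] {d : K} (hd0 : d ≠ 0)
    (hd : IsSquare (d : UniformSpace.Completion K)) :
    (Valued.v : Valuation K Γ₀).IsNearSquare d := by
  obtain ⟨s, hs⟩ := hd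
  have hds : Valued.v d = Valued.v s * Valued.v s := by
    rw [← Valued.valuedCompletion_apply, hs, map_mul]
  have hs0 : Valued.v s ≠ 0 := fun h ↦ hd0 (by simpa [h] using hds)
  have hball : {y | Valued.v (y - s) < Valued.v s} ∈ nhds s :=
    Valued.mem_nhds.mpr ⟨Units.mk0 _ (by rwa [ne_eq, Valuation.restrict_eq_zero_iff]),
      fun y hy ↦ by rwa [Set.mem_ofPred_eq, Units.val_mk0, Valuation.restrict_lt_iff] at hy⟩
  obtain ⟨r, hr : Valued.v ((r : UniformSpace.Completion K) - s) < Valued.v s⟩ :=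
    UniformSpace.Completion.denseRange_coe.mem_nhds hball
  have hrs : Valued.v (r : UniformSpace.Completion K) = Valued.v s :=
    Valuation.map_eq_of_sub_lt _ hr
  refine ⟨r, ?_⟩
  rw [hds, ← Valued.valuedCompletion_apply, UniformSpace.Completion.coe_sub,
    UniformSpace.Completion.coe_mul, hs,
    show s * s - r * r = (s - r) * (s + r) by ring, map_mul, Valuation.map_sub_swap]
  exact mul_lt_mul_of_lt_of_le_of_nonneg_of_pos hr
    ((Valuation.map_add _ _ _).trans (max_le le_rfl hrs.le)) zero_le (zero_lt_iff.mpr hs0)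

theorem stmt_8_general (F : Type*) [Field F] [Valued F (WithZero (Multiplicative ℤ))]
    (a b : F) (ha : Valued.v a = 1)
    (hb : Valued.v b =
      ((Multiplicative.ofAdd (-1 : ℤ) : Multiplicative ℤ) : WithZero (Multiplicative ℤ)))
    (hansq : ¬ ∃ r : F, Valued.v (a - r * r) < 1)
    (i : F) (hi : i ^ 2 = -1) (d : F) (hd0 : d ≠ 0)
    (hdsq : IsSquare ((d : UniformSpace.Completion F))) :
    ¬ ∃ x y z : F, d = -(a * x ^ 2) - b * y ^ 2 + a * b * z ^ 2 := by
  rintro ⟨x, y, z, hxyz⟩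
  set v : Valuation F (WithZero (Multiplicative ℤ)) := Valued.v
  have hna : ¬ v.IsNearSquare a := by rwa [Valuation.IsNearSquare, ha]
  have hna_neg : ¬ v.IsNearSquare (-a) := fun h ↦ hna (by simpa using h.neg hi)
  set A := a * (i * x * (i * x))
  set C := i * y * (i * y) + a * (z * z)
  have hd : d = A + b * C := by linear_combination hxyz - (a * x ^ 2 + b * y ^ 2) * hi
  have hdn : v.IsNearSquare d := Valued.isNearSquare_of_isSquare_coe hd0 hdsq
  have heven : IsSquare (v A) := by rw [map_mul, ha, one_mul, map_mul]; exact ⟨_, rfl⟩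
  have hodd (hbC : b * C ≠ 0) : ¬ IsSquare (v (b * C)) := by
    rw [map_mul, hb]
    exact not_isSquare_mul_of_isSquare not_isSquare_ofAdd_neg_one
      (Valuation.isSquare_valuation_mul_self_add_mul ha hna_neg _ _)
      (by simpa using right_ne_zero_of_mul hbC)
  rcases lt_or_ge (v (b * C)) (v A) with hlt | hle
  · have hAd : v (A - d) < v A := by rwa [hd, sub_add_cancel_left, Valuation.map_neg]
    exact hna (hdn.of_valuation_sub_lt hAd).of_mul_mul_self
  · have hbC : b * C ≠ 0 := fun h ↦ hd0 (by simpa [h, hd] using hle)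
    have hvd : v d = v (b * C) := by
      rw [hd]; exact v.map_add_eq_of_lt_right (hle.lt_of_ne fun h ↦ hodd hbC (h ▸ heven))
    exact hodd hbC (hvd ▸ hdn.isSquare_valuation)

/-- Lemma `not-pure-quat-norm`: let `(F, v)` be a discretely valued
field with residue field of characteristic `≠ 2`, let `a, b ∈ F` with `v(a) = 0`,
`v(b) = 1`, and suppose the residue class of `a` is not a square in the residue field
(expressed as: `a` is not congruent to a square modulo the maximal ideal).  If `F`
contains `i` with `i² = -1` and `d ∈ F^×` becomes a square in the completion `F_v`, then
`d = -a x² - b y² + a b z²` has no solution `x, y, z ∈ F`; that is, `d` is not the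
reduced norm of a pure quaternion in `(a,b)_F`. -/
theorem stmt_8 (F : Type*) [Field F] [Valued F (WithZero (Multiplicative ℤ))]
    (hres : ringChar (IsLocalRing.ResidueField
      ((Valued.v : Valuation F (WithZero (Multiplicative ℤ))).valuationSubring)) ≠ 2)
    (a b : F) (ha : Valued.v a = 1)
    (hb : Valued.v b =
      ((Multiplicative.ofAdd (-1 : ℤ) : Multiplicative ℤ) : WithZero (Multiplicative ℤ)))
    (hansq : ¬ ∃ r : F, Valued.v (a - r * r) < 1)
    (i : F) (hi : i ^ 2 = -1) (d : F) (hd0 : d ≠ 0)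
    (hdsq : IsSquare ((d : UniformSpace.Completion F))) :
    ¬ ∃ x y z : F, d = -(a * x ^ 2) - b * y ^ 2 + a * b * z ^ 2 :=
  stmt_8_general F a b ha hb hansq i hi d hd0 hdsq
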